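/- Let α₁,…,α₆ be the dual basis of the standard basis of ℝ⁶ and let ω₂ = α₁∧α₂∧α₃ + α₁∧α₄∧α₅ + α₂∧α₄∧α₆ − α₃∧α₅∧α₆. Then ω₂ is multisymplectic and Δ(ω₂) = {0}, i.e. ω₂ is of type 2. -/

import Mathlib

/-!
Index the basis from `0`, as in `Fin 6`, and put `a := ι_v ω₂`. Its coefficients
`a₁₂, a₀₂, a₀₁, a₀₄, a₀₃, a₁₃` are `v₀, -v₁, v₂, -v₃, v₄, v₅`, so `v ↦ ι_v ω₂` is injective.
On `eᵢ, eⱼ, eₖ, eₗ` the 4-form `a ∧ a` is twice the Pfaffian `aᵢⱼ aₖₗ - aᵢₖ aⱼₗ + aᵢₗ aⱼₖ`,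
which for `(i,j,k,l) = (1,2,3,4), (0,2,3,5), (0,1,4,5)` is `v₀² + v₅²`, `-(v₁² + v₄²)` and
`-(v₂² + v₃²)`; hence `a ∧ a = 0` forces `v = 0`.
-/

open scoped TensorProduct

/-- The wedge product of real-valued alternating forms
(antisymmetrized shuffle-sum convention, via `AlternatingMap.domCoprod`). -/
noncomputable def wedge {V : Type*} [AddCommGroup V] [Module ℝ V] {p q : ℕ}
    (α : V [⋀^Fin p]→ₗ[ℝ] ℝ) (β : V [⋀^Fin q]→ₗ[ℝ] ℝ) : V [⋀^Fin (p + q)]→ₗ[ℝ] ℝ :=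
  ((LinearMap.mul' ℝ ℝ).compAlternatingMap (α.domCoprod β)).domDomCongr finSumFinEquiv

/-- The interior product `ι_v ω = ω(v, ·, …, ·)`. -/
noncomputable def iota {V : Type*} [AddCommGroup V] [Module ℝ V] {n : ℕ}
    (v : V) (ω : V [⋀^Fin (n + 1)]→ₗ[ℝ] ℝ) : V [⋀^Fin n]→ₗ[ℝ] ℝ :=
  ω.curryLeft v

/-- `Δ(ω) = {v ∈ V : (ι_v ω) ∧ (ι_v ω) = 0}` for a 3-form `ω`. -/
noncomputable def Delta {V : Type*} [AddCommGroup V] [Module ℝ V]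
    (ω : V [⋀^Fin 3]→ₗ[ℝ] ℝ) : Set V :=
  {v | wedge (iota v ω) (iota v ω) = 0}

/-- A form is multisymplectic iff `v ↦ ι_v ω` is injective. -/
noncomputable def Multisymplectic {V : Type*} [AddCommGroup V] [Module ℝ V] {n : ℕ}
    (ω : V [⋀^Fin (n + 1)]→ₗ[ℝ] ℝ) : Prop :=
  Function.Injective fun v : V => iota v ω

/-- The dual-basis 1-form `αᵢ` on `ℝⁿ`, as an alternating 1-form. -/
noncomputable def basisOneForm {n : ℕ} (i : Fin n) : (Fin n → ℝ) [⋀^Fin 1]→ₗ[ℝ] ℝ :=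
  AlternatingMap.ofSubsingleton ℝ (Fin n → ℝ) ℝ 0 (LinearMap.proj i)

/-- The alternating 3-form `αᵢ ∧ αⱼ ∧ αₖ` on `ℝⁿ`. -/
noncomputable def w3 {n : ℕ} (i j k : Fin n) : (Fin n → ℝ) [⋀^Fin 3]→ₗ[ℝ] ℝ :=
  wedge (wedge (basisOneForm i) (basisOneForm j)) (basisOneForm k)

open Equiv
open scoped Nat

theorem sum_perm_fin_succ {M : Type*} [AddCommMonoid M] {n : ℕ} (f : Perm (Fin (n + 1)) → M) :
    ∑ σ, f σ = ∑ i, ∑ σ : Perm (Fin n), f (Perm.decomposeFin.symm (i, σ)) := by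
  rw [← Fintype.sum_prod_type']
  exact (Fintype.sum_equiv Perm.decomposeFin _ _ fun σ => by simp).trans rfl

theorem Equiv.Perm.decomposeFin_symm_apply_two {n : ℕ} (p : Fin (n + 3))
    (e : Perm (Fin (n + 2))) : Perm.decomposeFin.symm (p, e) 2 = swap 0 p (e 1).succ :=
  Perm.decomposeFin_symm_apply_succ e p 1

theorem Equiv.Perm.decomposeFin_symm_apply_three {n : ℕ} (p : Fin (n + 4))
    (e : Perm (Fin (n + 3))) : Perm.decomposeFin.symm (p, e) 3 = swap 0 p (e 2).succ :=
  Perm.decomposeFin_symm_apply_succ e p 2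

theorem Function.comp_fin_one_eq {α β : Type*} (v : α → β) (f : Fin 1 → α) :
    v ∘ f = ![v (f 0)] := by
  funext i
  fin_cases i
  rfl

theorem Function.comp_fin_two_eq {α β : Type*} (v : α → β) (f : Fin 2 → α) :
    v ∘ f = ![v (f 0), v (f 1)] := by
  funext i
  fin_cases i <;> rfl

theorem AlternatingMap.apply_fin_two_swap {R M N : Type*} [CommSemiring R] [AddCommMonoid M]
    [Module R M] [AddCommGroup N] [Module R N] (a : M [⋀^Fin 2]→ₗ[R] N) (x y : M) :
    a ![y, x] = -a ![x, y] := by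
  rw [← a.map_swap ![x, y] zero_ne_one]
  congr 1
  funext i
  fin_cases i <;> rfl

section Wedge

variable {V : Type*} [AddCommGroup V] [Module ℝ V]

theorem factorial_mul_factorial_mul_wedge_apply {p q : ℕ} (α : V [⋀^Fin p]→ₗ[ℝ] ℝ)
    (β : V [⋀^Fin q]→ₗ[ℝ] ℝ) (v : Fin (p + q) → V) :
    (p ! * q ! : ℝ) * wedge α β v =
      ∑ σ : Perm (Fin (p + q)), (Perm.sign σ : ℤ) *
        (α (v ∘ σ ∘ Fin.castAdd q) * β (v ∘ σ ∘ Fin.natAdd p)) := by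
  let u : Fin p ⊕ Fin q → V := v ∘ finSumFinEquiv
  have h := congrArg (fun f => LinearMap.mul' ℝ ℝ (f u))
    (MultilinearMap.domCoprod_alternization_eq α β)
  simp only [Fintype.card_fin, MultilinearMap.alternatization_apply, map_sum] at h
  refine (Eq.trans ?_ h.symm).trans
    (Fintype.sum_equiv (permCongr finSumFinEquiv) _ _ fun σ => ?_)
  · rw [AlternatingMap.smul_apply, map_nsmul, nsmul_eq_mul]
    push_cast
    rfl
  · rw [Perm.sign_permCongr, Units.smul_def, map_zsmul, zsmul_eq_mul]
    simp [u, Function.comp_def, permCongr_apply]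

theorem wedge_apply_one_one (a b : V [⋀^Fin 1]→ₗ[ℝ] ℝ) (v : Fin 2 → V) :
    wedge a b v = a ![v 0] * b ![v 1] - a ![v 1] * b ![v 0] := by
  have h := factorial_mul_factorial_mul_wedge_apply a b v
  simp only [sum_perm_fin_succ, Fintype.sum_unique, Fin.sum_univ_succ,
    Function.comp_fin_one_eq] at h
  simp at h
  linear_combination h

theorem wedge_apply_two_one (a : V [⋀^Fin 2]→ₗ[ℝ] ℝ) (b : V [⋀^Fin 1]→ₗ[ℝ] ℝ) (v : Fin 3 → V) :
    wedge a b v =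
      a ![v 0, v 1] * b ![v 2] - a ![v 0, v 2] * b ![v 1] + a ![v 1, v 2] * b ![v 0] := by
  have h := factorial_mul_factorial_mul_wedge_apply a b v
  simp only [sum_perm_fin_succ, Fintype.sum_unique, Fin.sum_univ_succ,
    Function.comp_fin_one_eq, Function.comp_fin_two_eq] at h
  simp [Perm.decomposeFin_symm_apply_two, swap_apply_def] at h
  simp only [a.apply_fin_two_swap (v 0) (v 1), a.apply_fin_two_swap (v 0) (v 2),
    a.apply_fin_two_swap (v 1) (v 2)] at h
  linear_combination h / 2

theorem wedge_apply_two_two (a b : V [⋀^Fin 2]→ₗ[ℝ] ℝ) (v : Fin 4 → V) :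
    wedge a b v = a ![v 0, v 1] * b ![v 2, v 3] - a ![v 0, v 2] * b ![v 1, v 3]
      + a ![v 0, v 3] * b ![v 1, v 2] + a ![v 1, v 2] * b ![v 0, v 3]
      - a ![v 1, v 3] * b ![v 0, v 2] + a ![v 2, v 3] * b ![v 0, v 1] := by
  have h := factorial_mul_factorial_mul_wedge_apply a b v
  simp only [sum_perm_fin_succ, Fintype.sum_unique, Fin.sum_univ_succ,
    Function.comp_fin_two_eq] at h
  simp [Perm.decomposeFin_symm_apply_two, Perm.decomposeFin_symm_apply_three,
    swap_apply_def] at h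
  simp only [a.apply_fin_two_swap (v 0) (v 1), a.apply_fin_two_swap (v 0) (v 2),
    a.apply_fin_two_swap (v 0) (v 3), a.apply_fin_two_swap (v 1) (v 2),
    a.apply_fin_two_swap (v 1) (v 3), a.apply_fin_two_swap (v 2) (v 3),
    b.apply_fin_two_swap (v 0) (v 1), b.apply_fin_two_swap (v 0) (v 2),
    b.apply_fin_two_swap (v 0) (v 3), b.apply_fin_two_swap (v 1) (v 2),
    b.apply_fin_two_swap (v 1) (v 3), b.apply_fin_two_swap (v 2) (v 3)] at h
  linear_combination h / 4

theorem wedge_self_apply_two_two (a : V [⋀^Fin 2]→ₗ[ℝ] ℝ) (x y z w : V) :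
    wedge a a ![x, y, z, w] =
      2 * (a ![x, y] * a ![z, w] - a ![x, z] * a ![y, w] + a ![x, w] * a ![y, z]) := by
  rw [wedge_apply_two_two]
  simp only [Matrix.cons_val]
  ring

theorem wedge_zero_left {p q : ℕ} (β : V [⋀^Fin q]→ₗ[ℝ] ℝ) :
    wedge (0 : V [⋀^Fin p]→ₗ[ℝ] ℝ) β = 0 := by
  simp [wedge, ← AlternatingMap.domCoprod'_apply]

theorem iota_apply {n : ℕ} (v : V) (ω : V [⋀^Fin (n + 1)]→ₗ[ℝ] ℝ) (u : Fin n → V) :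
    iota v ω u = ω (Matrix.vecCons v u) :=
  rfl

theorem zero_mem_Delta (ω : V [⋀^Fin 3]→ₗ[ℝ] ℝ) : 0 ∈ Delta ω := by
  simp [Delta, iota, wedge_zero_left]

theorem multisymplectic_iff_forall_iota_eq_zero {n : ℕ} {ω : V [⋀^Fin (n + 1)]→ₗ[ℝ] ℝ} :
    Multisymplectic ω ↔ ∀ v, iota v ω = 0 → v = 0 :=
  injective_iff_map_eq_zero ω.curryLeft

end Wedge

theorem basisOneForm_apply {n : ℕ} (i : Fin n) (x : Fin n → ℝ) :
    basisOneForm i ![x] = x i := by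
  simp [basisOneForm]

theorem w3_apply {n : ℕ} (i j k : Fin n) (x y z : Fin n → ℝ) :
    w3 i j k ![x, y, z] = Matrix.det !![x i, x j, x k; y i, y j, y k; z i, z j, z k] := by
  simp [w3, wedge_apply_two_one, wedge_apply_one_one, basisOneForm_apply, Matrix.det_fin_three]
  ring

section Omega2

local notation "ω₂" => (w3 0 1 2 + w3 0 3 4 + w3 1 3 5 - w3 2 4 5 : (Fin 6 → ℝ) [⋀^Fin 3]→ₗ[ℝ] ℝ)

theorem eq_zero_of_iota_omega2_eq_zero {v : Fin 6 → ℝ} (h : iota v ω₂ = 0) : v = 0 := by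
  have hv (i j : Fin 6) : ω₂ ![v, Pi.single i 1, Pi.single j 1] = 0 := by
    rw [← iota_apply, h, AlternatingMap.zero_apply]
  have h0 := hv 1 2; have h1 := hv 0 2; have h2 := hv 0 1
  have h3 := hv 0 4; have h4 := hv 0 3; have h5 := hv 1 3
  simp [w3_apply, Matrix.det_fin_three] at h0 h1 h2 h3 h4 h5
  funext k
  fin_cases k <;> assumption

theorem eq_zero_of_mem_Delta_omega2 {v : Fin 6 → ℝ} (h : v ∈ Delta ω₂) : v = 0 := by
  have pfaffian_eq_zero (x y z w : Fin 6 → ℝ) :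
      ω₂ ![v, x, y] * ω₂ ![v, z, w] - ω₂ ![v, x, z] * ω₂ ![v, y, w]
        + ω₂ ![v, x, w] * ω₂ ![v, y, z] = 0 := by
    have := congr($h ![x, y, z, w])
    rw [wedge_self_apply_two_two] at this
    simpa [iota_apply] using this
  have h₁ := pfaffian_eq_zero (Pi.single 1 1) (Pi.single 2 1) (Pi.single 3 1) (Pi.single 4 1)
  have h₂ := pfaffian_eq_zero (Pi.single 0 1) (Pi.single 2 1) (Pi.single 3 1) (Pi.single 5 1)
  have h₃ := pfaffian_eq_zero (Pi.single 0 1) (Pi.single 1 1) (Pi.single 4 1) (Pi.single 5 1)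
  simp [w3_apply, Matrix.det_fin_three] at h₁ h₂ h₃
  obtain ⟨h0, h5⟩ := mul_self_add_mul_self_eq_zero.1 h₁
  obtain ⟨h1, h4⟩ := mul_self_add_mul_self_eq_zero.1 (by linarith : v 1 * v 1 + v 4 * v 4 = 0)
  obtain ⟨h2, h3⟩ := mul_self_add_mul_self_eq_zero.1 (by linarith : v 2 * v 2 + v 3 * v 3 = 0)
  funext k
  fin_cases k <;> assumption

end Omega2

/-- The standard type-2 form
`ω₂ = α₁∧α₂∧α₃ + α₁∧α₄∧α₅ + α₂∧α₄∧α₆ − α₃∧α₅∧α₆` on `ℝ⁶` is multisymplectic and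
satisfies `Δ(ω₂) = {0}`, i.e. it is of type 2. -/
theorem omega2_multisymplectic_type2 :
    Multisymplectic (w3 0 1 2 + w3 0 3 4 + w3 1 3 5 - w3 2 4 5 :
        (Fin 6 → ℝ) [⋀^Fin 3]→ₗ[ℝ] ℝ) ∧
      Delta (w3 0 1 2 + w3 0 3 4 + w3 1 3 5 - w3 2 4 5 :
        (Fin 6 → ℝ) [⋀^Fin 3]→ₗ[ℝ] ℝ) = {0} :=
  ⟨multisymplectic_iff_forall_iota_eq_zero.2 fun _ => eq_zero_of_iota_omega2_eq_zero,
    Set.eq_singleton_iff_unique_mem.2 ⟨zero_mem_Delta _, fun _ => eq_zero_of_mem_Delta_omega2⟩⟩
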